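/- arXiv:2206.05199 — 5 statements merged into one kernel-verified Lean document; each statement's English description precedes it below -/
import Mathlib

section
/- If (x,y) ∈ R(ε,δ) and x + y ≤ 1, then 1 − x − y ≤ (e^ε − 1 + 2δ)/(e^ε + 1). That is, the membership inference advantage (1 − FNR) − FPR of any point of the privacy region is at most (e^ε − 1 + 2δ)/(e^ε + 1). -/
/-- The privacy region `R(ε,δ)` of Kairouz et al.: pairs of (FNR, FPR) achievable
by hypothesis tests against an `(ε,δ)`-differentially private mechanism. -/
def privacyRegion (ε δ : ℝ) : Set (ℝ × ℝ) :=
  {p | 0 ≤ p.1 ∧ p.1 ≤ 1 ∧ 0 ≤ p.2 ∧ p.2 ≤ 1 ∧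
    1 - δ ≤ p.1 + Real.exp ε * p.2 ∧ 1 - δ ≤ p.2 + Real.exp ε * p.1 ∧
    p.2 + Real.exp ε * p.1 ≤ Real.exp ε + δ ∧ p.1 + Real.exp ε * p.2 ≤ Real.exp ε + δ}

/-- The membership inference advantage `(1 − FNR) − FPR` of any point of the privacy
region with `FNR + FPR ≤ 1` is at most `(e^ε − 1 + 2δ)/(e^ε + 1)`. -/
theorem advantage_le_of_mem_privacyRegion (ε δ : ℝ) (hε : 0 < ε) (hδ0 : 0 ≤ δ) (hδ1 : δ ≤ 1)
    (x y : ℝ) (hmem : (x, y) ∈ privacyRegion ε δ) (hxy : x + y ≤ 1) :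
    1 - x - y ≤ (Real.exp ε - 1 + 2 * δ) / (Real.exp ε + 1) := by
  obtain ⟨hx0, hx1, hy0, hy1, h1, h2, h3, h4⟩ := hmem
  have hE : (0:ℝ) < Real.exp ε + 1 := by positivity

  simp only [] at *; rw [le_div_iff₀ hE]
  nlinarith [Real.exp_pos ε]
end

section
/- The point (x*, y*) with x* = y* = (1 − δ)/(e^ε + 1) lies in R(ε,δ) and achieves advantage (1 − x*) − y* = (e^ε − 1 + 2δ)/(e^ε + 1); hence the advantage bound over the privacy region is tight. -/
/-- The point `x* = y* = (1 − δ)/(e^ε + 1)` lies in the privacy region and achieves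
advantage exactly `(e^ε − 1 + 2δ)/(e^ε + 1)`, so the advantage bound is tight. -/
theorem advantage_bound_tight (ε δ : ℝ) (hε : 0 < ε) (hδ0 : 0 ≤ δ) (hδ1 : δ ≤ 1) :
    ((1 - δ) / (Real.exp ε + 1), (1 - δ) / (Real.exp ε + 1)) ∈ privacyRegion ε δ ∧
    (1 - (1 - δ) / (Real.exp ε + 1)) - (1 - δ) / (Real.exp ε + 1) =
      (Real.exp ε - 1 + 2 * δ) / (Real.exp ε + 1) := by
  set E := Real.exp ε with hEdef
  have hE : 1 < E := by rw [hEdef, ← Real.exp_zero]; exact Real.exp_lt_exp.mpr hε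
  have hpos : 0 < E + 1 := by linarith
  have h1δ : 0 ≤ 1 - δ := by linarith
  have h01 : 0 ≤ (1 - δ) / (E + 1) := by positivity
  have hle1 : (1 - δ) / (E + 1) ≤ 1 := by rw [div_le_one hpos]; linarith
  have key : (1 - δ) / (E + 1) + E * ((1 - δ) / (E + 1)) = 1 - δ := by
    field_simp; ring
  refine ⟨?_, by field_simp; ring⟩
  simp only [privacyRegion, Set.mem_setOf_eq, ← hEdef]
  exact ⟨h01, hle1, h01, hle1, key.ge, key.ge, by linarith, by linarith⟩
end

section
/- If T is (ε,δ)-differentially private, then for any adjacent inputs D, D' and any measurable rejection region R, the pair (P[T(D') ∉ R], P[T(D) ∈ R]) of false negative and false positive rates lies in the privacy region R(ε,δ). -/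
open MeasureTheory

/-- If `T` is `(ε,δ)`-DP, then for any adjacent `D, D'` and measurable rejection
region `R`, the pair `(P[T(D') ∉ R], P[T(D) ∈ R])` of false negative and false
positive rates lies in the privacy region. -/
theorem fnr_fpr_mem_privacyRegion {X Y : Type*} [MeasurableSpace Y]
    (T : X → Measure Y) (hprob : ∀ x, IsProbabilityMeasure (T x))
    (Adj : X → X → Prop) (hsym : Symmetric Adj)
    (ε δ : ℝ) (hε : 0 < ε) (hδ0 : 0 ≤ δ) (hδ1 : δ ≤ 1)
    (hDP : ∀ x x', Adj x x' → ∀ O : Set Y, MeasurableSet O →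
      T x O ≤ ENNReal.ofReal (Real.exp ε) * T x' O + ENNReal.ofReal δ)
    (D D' : X) (hadj : Adj D D') (R : Set Y) (hR : MeasurableSet R) :
    ((T D' Rᶜ).toReal, (T D R).toReal) ∈ privacyRegion ε δ := by
  have heε : (0:ℝ) < Real.exp ε := Real.exp_pos ε
  have key : ∀ (x x' : X), Adj x x' → ∀ S : Set Y, MeasurableSet S →
      (T x S).toReal ≤ Real.exp ε * (T x' S).toReal + δ := by
    intro x x' h S hS
    have h1 : T x S ≤ ENNReal.ofReal (Real.exp ε * (T x' S).toReal + δ) := by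
      rw [ENNReal.ofReal_add (by positivity) hδ0, ENNReal.ofReal_mul heε.le,
        ENNReal.ofReal_toReal (measure_ne_top _ _)]
      exact hDP x x' h S hS
    calc (T x S).toReal ≤ (ENNReal.ofReal (Real.exp ε * (T x' S).toReal + δ)).toReal :=
          ENNReal.toReal_mono ENNReal.ofReal_ne_top h1
      _ ≤ _ := le_of_eq (ENNReal.toReal_ofReal (by positivity))
  have hc : ∀ x, (T x Rᶜ).toReal = 1 - (T x R).toReal := by
    intro x
    haveI := hprob x
    rw [prob_compl_eq_one_sub hR,
      ENNReal.toReal_sub_of_le prob_le_one ENNReal.one_ne_top, ENNReal.toReal_one]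
  have hb0 : 0 ≤ (T D R).toReal := ENNReal.toReal_nonneg
  have hb1 : (T D R).toReal ≤ 1 := by
    haveI := hprob D; exact ENNReal.toReal_le_of_le_ofReal zero_le_one (by simpa using prob_le_one)
  have ha0 : 0 ≤ (T D' R).toReal := ENNReal.toReal_nonneg
  have ha1 : (T D' R).toReal ≤ 1 := by
    haveI := hprob D'; exact ENNReal.toReal_le_of_le_ofReal zero_le_one (by simpa using prob_le_one)
  have k1 := key D D' hadj R hR
  have k2 := key D' D (hsym hadj) R hR
  have k3 := key D D' hadj Rᶜ hR.compl
  have k4 := key D' D (hsym hadj) Rᶜ hR.compl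
  rw [hc D, hc D'] at k3 k4
  rw [hc D']
  simp only [privacyRegion, Set.mem_setOf_eq]
  refine ⟨by linarith, by linarith, hb0, hb1, by linarith, by linarith, by linarith, by linarith⟩
end

section
/- For any (ε,δ)-differentially private mechanism and any membership-style distinguisher (modeled as a rejection region R on outputs of T applied to one of two adjacent datasets, with the dataset chosen by a fair coin), the probability of a correct guess is at most 1/2 + (e^ε − 1 + 2δ)/(2(e^ε + 1)); equivalently, the membership inference advantage is at most (e^ε − 1 + 2δ)/(e^ε + 1). -/
open MeasureTheory

/-- Membership inference advantage bound: if `T` is `(ε,δ)`-DP, then for any adjacent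
datasets `D₀, D₁` and any measurable rejection region `R`, the advantage
`P[T(D₁) ∈ R] − P[T(D₀) ∈ R]` of the induced distinguisher is at most
`(e^ε − 1 + 2δ)/(e^ε + 1)`; equivalently the probability of a correct guess of a fair
coin is at most `1/2 + (e^ε − 1 + 2δ)/(2(e^ε + 1))`. -/
theorem mia_advantage_bound {X Y : Type*} [MeasurableSpace Y]
    (T : X → Measure Y) (hprob : ∀ x, IsProbabilityMeasure (T x))
    (Adj : X → X → Prop) (hsym : Symmetric Adj)
    (ε δ : ℝ) (hε : 0 < ε) (hδ0 : 0 ≤ δ) (hδ1 : δ ≤ 1)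
    (hDP : ∀ x x', Adj x x' → ∀ O : Set Y, MeasurableSet O →
      T x O ≤ ENNReal.ofReal (Real.exp ε) * T x' O + ENNReal.ofReal δ)
    (D₀ D₁ : X) (hadj : Adj D₀ D₁) (R : Set Y) (hR : MeasurableSet R) :
    (T D₁ R).toReal - (T D₀ R).toReal ≤
      (Real.exp ε - 1 + 2 * δ) / (Real.exp ε + 1) := by
  have hprob0 := hprob D₀
  have hprob1 := hprob D₁
  have hne : ∀ (x : X) (S : Set Y), T x S ≠ ⊤ := fun x S => measure_ne_top _ _
  -- real versions of measures
  have toReal_le : ∀ (x x' : X) (S : Set Y), Adj x x' → MeasurableSet S →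
      (T x S).toReal ≤ Real.exp ε * (T x' S).toReal + δ := by
    intro x x' S h hS
    have h1 := hDP x x' h S hS
    have hrhs : ENNReal.ofReal (Real.exp ε) * T x' S + ENNReal.ofReal δ ≠ ⊤ := by
      simp [ENNReal.mul_ne_top, hne]
    have := ENNReal.toReal_mono hrhs h1
    rwa [ENNReal.toReal_add (by simp [ENNReal.mul_ne_top, hne]) (by simp),
      ENNReal.toReal_mul, ENNReal.toReal_ofReal (Real.exp_pos ε).le,
      ENNReal.toReal_ofReal hδ0] at this
  have h1 := toReal_le D₁ D₀ R (hsym hadj) hR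
  have h2 := toReal_le D₀ D₁ Rᶜ hadj hR.compl
  have hc0 : (T D₀ Rᶜ).toReal = 1 - (T D₀ R).toReal := by
    have := prob_compl_eq_one_sub (μ := T D₀) hR
    rw [this, ENNReal.toReal_sub_of_le (prob_le_one) (by simp)]
    simp
  have hc1 : (T D₁ Rᶜ).toReal = 1 - (T D₁ R).toReal := by
    have := prob_compl_eq_one_sub (μ := T D₁) hR
    rw [this, ENNReal.toReal_sub_of_le (prob_le_one) (by simp)]
    simp
  rw [hc0, hc1] at h2
  have hexp : 0 < Real.exp ε + 1 := by positivity
  rw [le_div_iff₀ hexp]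
  nlinarith [Real.exp_pos ε]
end

section
/- For 0 < y < 1−δ and x > 0, the supremum of the set {ε > 0 : (x,y) ∉ R(ε,δ)} equals max{log((1 − δ − y)/x), log((1 − δ − x)/y), 0} when also x < 1−δ; i.e., the empirical ε lower bound formula log-max characterizes the boundary of membership in the privacy region. -/
/-- The empirical `ε` lower bound formula characterizes membership in the privacy
region: for `0 < x < 1 − δ`, `0 < y < 1 − δ` with `x + y ≤ 1` (`x` = FNR, `y` = FPR),
`(x,y) ∈ R(ε,δ)` iff `ε ≥ max{log((1 − δ − y)/x), log((1 − δ − x)/y)}`. -/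
theorem mem_privacyRegion_iff_log_max (δ : ℝ) (hδ0 : 0 ≤ δ) (hδ1 : δ < 1)
    (x y : ℝ) (hx0 : 0 < x) (hx1 : x < 1 - δ) (hy0 : 0 < y) (hy1 : y < 1 - δ)
    (hxy : x + y ≤ 1) (ε : ℝ) (hε : 0 < ε) :
    (x, y) ∈ privacyRegion ε δ ↔
      max (Real.log ((1 - δ - y) / x)) (Real.log ((1 - δ - x) / y)) ≤ ε := by
  have hexp1 : (1:ℝ) ≤ Real.exp ε := by
    have := Real.add_one_le_exp ε; linarith
  have h1 : Real.log ((1 - δ - y) / x) ≤ ε ↔ 1 - δ ≤ y + Real.exp ε * x := by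
    rw [Real.log_le_iff_le_exp (div_pos (by linarith) hx0), div_le_iff₀ hx0]
    constructor <;> intro h <;> nlinarith
  have h2 : Real.log ((1 - δ - x) / y) ≤ ε ↔ 1 - δ ≤ x + Real.exp ε * y := by
    rw [Real.log_le_iff_le_exp (div_pos (by linarith) hy0), div_le_iff₀ hy0]
    constructor <;> intro h <;> nlinarith
  simp only [privacyRegion, Set.mem_setOf_eq, max_le_iff, h1, h2]
  constructor
  · rintro ⟨-, -, -, -, h5, h6, -, -⟩; exact ⟨h6, h5⟩
  · rintro ⟨ha, hb⟩
    refine ⟨le_of_lt hx0, by linarith, le_of_lt hy0, by linarith, hb, ha, ?_, ?_⟩ <;>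
      nlinarith
end
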